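/- For every integer k ≥ 0 and every real b ≠ 0, the integral ∫_{−∞}^{∞} He_{k+1}(b·sinh r)·exp(−(b²/2)·sinh² r)·exp(k·r) dr converges and equals 0. Equivalently, in physicists' normalization, ∫_{−∞}^{∞} H_{k+1}(a·sinh r)·exp(−a²·sinh² r)·e^{kr} dr = 0 for a ≠ 0. (This is the vanishing of the period of the Schwartz form φ^U_{1,[k]} over the hyperbolic line against a timelike vector; it shows the O(1,1) theta lift has no negative Fourier coefficients, i.e. is holomorphic.) -/

import Mathlib

/-!
Substituting `t = sinh r` turns `e^{kr}` into `(t + √(1 + t²))^k`, which is not a polynomial in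
`t`. Since `He_{k+1}(bt) e^{-b²t²/2}` has parity `(-1)^{k+1}`, the integral only sees the part of
`e^{kr}` of the same parity, `(e^{kr} - (-1)^k e^{-kr}) / 2 = cosh r · P_k(sinh r)` with `P_k` the
Pell polynomial of degree `k - 1`. After the substitution the integral becomes
`∫ He_{k+1}(bt) e^{-b²t²/2} P_k(t) dt`, which vanishes by orthogonality of `He_{k+1}` to
polynomials of lower degree.
-/

noncomputable section

open MeasureTheory Polynomial Real

theorem integrable_aeval_mul_exp_neg_mul_sq {R : Type*} [CommSemiring R] [Algebra R ℝ]
    (p : R[X]) {c : ℝ} (hc : 0 < c) :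
    Integrable fun x : ℝ => aeval x p * exp (-c * x ^ 2) := by
  induction p using Polynomial.induction_on' with
  | add p q hp hq => simpa only [map_add, add_mul] using hp.fun_add hq
  | monomial n a =>
    have h := integrable_rpow_mul_exp_neg_mul_sq hc (s := n) (by linarith [n.cast_nonneg (α := ℝ)])
    simp only [rpow_natCast] at h
    simpa only [aeval_monomial, mul_assoc] using h.const_mul (algebraMap R ℝ a)

theorem aeval_neg_hermite {R : Type*} [CommRing R] (n : ℕ) (x : R) :
    aeval (-x) (hermite n) = (-1) ^ n * aeval x (hermite n) := by
  simp only [aeval_eq_sum_range, Finset.mul_sum, mul_smul_comm]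
  refine Finset.sum_congr rfl fun i _ => ?_
  rcases Nat.even_or_odd (n + i) with h | h
  · rw [neg_pow, neg_one_pow_congr (Nat.even_add.mp h).symm]
  · simp [coeff_hermite_of_odd_add h]

def hermiteGaussian (n : ℕ) (x : ℝ) : ℝ :=
  aeval x (hermite n) * exp (-(x ^ 2 / 2))

theorem hermiteGaussian_mul (n : ℕ) (b t : ℝ) :
    hermiteGaussian n (b * t) = aeval (b * t) (hermite n) * exp (-(b ^ 2 / 2) * t ^ 2) := by
  rw [hermiteGaussian]
  ring_nf

theorem hermiteGaussian_neg (n : ℕ) (x : ℝ) :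
    hermiteGaussian n (-x) = (-1) ^ n * hermiteGaussian n x := by
  rw [hermiteGaussian, hermiteGaussian, aeval_neg_hermite, neg_sq, mul_assoc]

theorem hasDerivAt_hermiteGaussian (n : ℕ) (x : ℝ) :
    HasDerivAt (hermiteGaussian n) (-hermiteGaussian (n + 1) x) x := by
  have hgauss : HasDerivAt (fun x : ℝ => exp (-(x ^ 2 / 2))) (exp (-(x ^ 2 / 2)) * -x) x := by
    simpa using ((hasDerivAt_pow 2 x).div_const 2).neg.exp
  refine (((hermite n).hasDerivAt_aeval x).mul hgauss).congr_deriv ?_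
  rw [hermiteGaussian, hermite_succ]
  simp only [map_sub, map_mul, aeval_X]
  ring

theorem continuous_hermiteGaussian (n : ℕ) : Continuous (hermiteGaussian n) :=
  continuous_iff_continuousAt.mpr fun x => (hasDerivAt_hermiteGaussian n x).continuousAt

theorem integrable_hermiteGaussian_mul_aeval (n : ℕ) (p : ℝ[X]) :
    Integrable fun x => hermiteGaussian n x * aeval x p := by
  refine (integrable_aeval_mul_exp_neg_mul_sq ((hermite n).map (algebraMap ℤ ℝ) * p)
    one_half_pos).congr (ae_of_all _ fun x => ?_)
  simp only [hermiteGaussian, map_mul, aeval_map_algebraMap]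
  ring_nf

/-- `hermiteGaussian (n + 1)` is minus the derivative of `hermiteGaussian n`, so integrating by parts
lowers `n` and the degree of `p` together. -/
theorem integral_hermiteGaussian_mul_aeval_eq_zero {n : ℕ} {p : ℝ[X]} (hp : p.natDegree < n) :
    ∫ x, hermiteGaussian n x * aeval x p = 0 := by
  induction n generalizing p with
  | zero => omega
  | succ n ih =>
    have hint := integrable_hermiteGaussian_mul_aeval
    have hparts := integral_mul_deriv_eq_deriv_mul_of_integrable
      (u := fun x => aeval x p) (u' := fun x => aeval x (derivative p))
      (v := fun x => -hermiteGaussian n x) (v' := hermiteGaussian (n + 1))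
      (fun x _ => p.hasDerivAt_aeval x)
      (fun x _ => by simpa using (hasDerivAt_hermiteGaussian n x).fun_neg)
      ((hint (n + 1) p).congr (ae_of_all _ fun x => mul_comm _ _))
      ((hint n (derivative p)).neg.congr (ae_of_all _ fun x => by simp [mul_comm]))
      ((hint n p).neg.congr (ae_of_all _ fun x => by simp [mul_comm]))
    have hlower : ∫ x, hermiteGaussian n x * aeval x (derivative p) = 0 := by
      by_cases hp0 : p.natDegree = 0
      · simp [derivative_of_natDegree_zero hp0]
      · exact ih ((natDegree_derivative_lt hp0).trans_le (by omega))
    simp only [mul_neg, integral_neg, neg_neg] at hparts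
    simp only [mul_comm (hermiteGaussian _ _), hparts]
    simpa only [mul_comm] using hlower

theorem aeval_mul_comp_C_inv_mul_X {K : Type*} [Field K] {b : K} (hb : b ≠ 0) (p : K[X])
    (t : K) : aeval (b * t) (p.comp (C b⁻¹ * X)) = aeval t p := by
  simp [inv_mul_cancel_left₀ hb]

theorem integrable_hermiteGaussian_mul_mul_aeval {b : ℝ} (hb : b ≠ 0) (n : ℕ) (p : ℝ[X]) :
    Integrable fun t => hermiteGaussian n (b * t) * aeval t p := by
  have h := (integrable_hermiteGaussian_mul_aeval n (p.comp (C b⁻¹ * X))).comp_mul_left' hb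
  simpa only [aeval_mul_comp_C_inv_mul_X hb] using h

theorem integral_hermiteGaussian_mul_mul_aeval_eq_zero {b : ℝ} (hb : b ≠ 0) {n : ℕ} {p : ℝ[X]}
    (hp : p.natDegree < n) : ∫ t, hermiteGaussian n (b * t) * aeval t p = 0 := by
  set q := p.comp (C b⁻¹ * X)
  have hq : q.natDegree < n :=
    natDegree_comp_le.trans_lt (by rwa [natDegree_C_mul_X _ (inv_ne_zero hb), mul_one])
  calc ∫ t, hermiteGaussian n (b * t) * aeval t p
      = ∫ t, hermiteGaussian n (b * t) * aeval (b * t) q := by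
        simp only [q, aeval_mul_comp_C_inv_mul_X hb]
    _ = |b⁻¹| • ∫ u, hermiteGaussian n u * aeval u q :=
        Measure.integral_comp_mul_left (fun u => hermiteGaussian n u * aeval u q) b
    _ = 0 := by rw [integral_hermiteGaussian_mul_aeval_eq_zero hq, smul_zero]

namespace Polynomial

variable (R : Type*) [CommRing R]

def pell : ℕ → R[X]
  | 0 => 0
  | 1 => 1
  | n + 2 => 2 * X * pell (n + 1) + pell n

variable {R}

theorem natDegree_pell_le (n : ℕ) : (pell R n).natDegree ≤ n := by
  induction n using Nat.strong_induction_on with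
  | _ n ih =>
    match n with
    | 0 => simp [pell]
    | 1 => simp [pell]
    | n + 2 =>
      have hlin : (2 * X : R[X]).natDegree ≤ 1 := by compute_degree
      have hprev := ih (n + 1) (by omega)
      rw [pell]
      exact (natDegree_add_le _ _).trans (max_le (natDegree_mul_le.trans (by omega))
        ((ih n (by omega)).trans (by omega)))

theorem add_pow_sub_sub_pow_eq_eval_pell {s c : R} (h : c ^ 2 = 1 + s ^ 2) (n : ℕ) :
    (s + c) ^ n - (s - c) ^ n = 2 * c * (pell R n).eval s := by
  induction n using Nat.strong_induction_on with
  | _ n ih =>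
    match n with
    | 0 => simp [pell]
    | 1 => simp [pell]; ring
    | n + 2 =>
      simp only [pell, eval_add, eval_mul, eval_X, eval_ofNat]
      linear_combination (2 * s) * ih (n + 1) (by omega) + ih n (by omega) +
        ((s + c) ^ n - (s - c) ^ n) * h

end Polynomial

theorem exp_mul_sub_neg_one_pow_mul_exp_neg (k : ℕ) (r : ℝ) :
    exp (k * r) - (-1) ^ k * exp (-(k * r)) = 2 * cosh r * (pell ℝ k).eval (sinh r) := by
  rw [← add_pow_sub_sub_pow_eq_eval_pell (cosh_sq' r), sinh_add_cosh, sinh_sub_cosh,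
    neg_pow (exp (-r)), ← exp_nat_mul, ← exp_nat_mul, mul_neg]

theorem exp_mul_le_two_pow_mul_cosh_mul (k : ℕ) (r : ℝ) :
    exp (k * r) ≤ 2 ^ k * cosh r * (1 + sinh r ^ 2) ^ k := by
  have hexp : exp r ≤ 2 * cosh r := by
    rw [cosh_eq]
    linarith [exp_pos (-r)]
  calc exp (k * r) = exp r ^ k := exp_nat_mul r k
    _ ≤ (2 * cosh r) ^ k := pow_le_pow_left₀ (exp_pos r).le hexp k
    _ = 2 ^ k * cosh r ^ k := mul_pow _ _ _
    _ ≤ 2 ^ k * cosh r ^ (2 * k + 1) :=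
      mul_le_mul_of_nonneg_left (pow_le_pow_right₀ (one_le_cosh r) (by omega)) (by positivity)
    _ = 2 ^ k * cosh r * (1 + sinh r ^ 2) ^ k := by rw [← cosh_sq', pow_succ, pow_mul]; ring

section SinhSubstitution

variable {E : Type*} [NormedAddCommGroup E] [NormedSpace ℝ E]

theorem integrable_cosh_smul_comp_sinh_iff {g : ℝ → E} :
    Integrable (fun r => cosh r • g (sinh r)) ↔ Integrable g := by
  have h := integrableOn_image_iff_integrableOn_abs_deriv_smul MeasurableSet.univ
    (fun r _ => (hasDerivAt_sinh r).hasDerivWithinAt) sinh_injective.injOn g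
  simpa only [Set.image_univ, sinh_surjective.range_eq, integrableOn_univ,
    abs_of_pos (cosh_pos _)] using h.symm

theorem integral_cosh_smul_comp_sinh (g : ℝ → E) :
    ∫ r, cosh r • g (sinh r) = ∫ t, g t := by
  have h := integral_image_eq_integral_abs_deriv_smul MeasurableSet.univ
    (fun r _ => (hasDerivAt_sinh r).hasDerivWithinAt) sinh_injective.injOn g
  simpa only [Set.image_univ, sinh_surjective.range_eq, setIntegral_univ,
    abs_of_pos (cosh_pos _)] using h.symm

end SinhSubstitution

theorem integrable_comp_sinh_mul_exp {g : ℝ → ℝ} (hg : Continuous g) (k : ℕ)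
    (hint : Integrable fun t => g t * (1 + t ^ 2) ^ k) :
    Integrable fun r => g (sinh r) * exp (k * r) := by
  have hdom : Integrable fun r => cosh r • (2 ^ k * |g (sinh r) * (1 + sinh r ^ 2) ^ k|) :=
    integrable_cosh_smul_comp_sinh_iff.mpr (hint.abs.const_mul _)
  refine hdom.mono' (by fun_prop) (ae_of_all _ fun r => ?_)
  rw [norm_mul, norm_of_nonneg (exp_pos _).le, smul_eq_mul, abs_mul,
    abs_of_nonneg (by positivity : (0 : ℝ) ≤ (1 + sinh r ^ 2) ^ k), Real.norm_eq_abs]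
  calc |g (sinh r)| * exp (k * r) ≤ |g (sinh r)| * (2 ^ k * cosh r * (1 + sinh r ^ 2) ^ k) :=
        mul_le_mul_of_nonneg_left (exp_mul_le_two_pow_mul_cosh_mul k r) (abs_nonneg _)
    _ = _ := by ring

theorem integral_comp_sinh_mul_exp_eq_integral_mul_pell {g : ℝ → ℝ} {k : ℕ}
    (hg : ∀ t, g (-t) = (-1) ^ (k + 1) * g t)
    (hint : Integrable fun r => g (sinh r) * exp (k * r)) :
    ∫ r, g (sinh r) * exp (k * r) = ∫ t, g t * (pell ℝ k).eval t := by
  have hsymm (r : ℝ) : g (sinh r) * exp (k * r) + g (sinh (-r)) * exp (k * -r) =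
      cosh r * (2 * (g (sinh r) * (pell ℝ k).eval (sinh r))) := by
    rw [sinh_neg, hg, mul_neg]
    linear_combination g (sinh r) * exp_mul_sub_neg_one_pow_mul_exp_neg k r
  have htwice : 2 * ∫ r, g (sinh r) * exp (k * r) = 2 * ∫ t, g t * (pell ℝ k).eval t := by
    calc 2 * ∫ r, g (sinh r) * exp (k * r)
        = ∫ r, (g (sinh r) * exp (k * r) + g (sinh (-r)) * exp (k * -r)) := by
          rw [integral_add hint hint.comp_neg,
            integral_neg_eq_self (fun r => g (sinh r) * exp (k * r))]
          ring
      _ = ∫ t, 2 * (g t * (pell ℝ k).eval t) := by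
          simp only [hsymm]
          exact integral_cosh_smul_comp_sinh fun t => 2 * (g t * (pell ℝ k).eval t)
      _ = 2 * ∫ t, g t * (pell ℝ k).eval t := integral_const_mul _ _
  linarith

/-- Vanishing of the period of the Schwartz form `φ^U_{1,[k]}` over the hyperbolic line
against a timelike vector: for every `k ≥ 0` and real `b ≠ 0`,
`∫_{−∞}^{∞} He_{k+1}(b·sinh r)·e^{−(b²/2)·sinh²r}·e^{kr} dr = 0`, where `He_n` is the
probabilists' Hermite polynomial.  Hence the `O(1,1)` theta lift has no negative Fourier
coefficients, i.e. it is holomorphic. -/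
theorem hermite_sinh_integral_vanishes (k : ℕ) (b : ℝ) (hb : b ≠ 0) :
    MeasureTheory.Integrable (fun r : ℝ =>
      (Polynomial.aeval (b * Real.sinh r) (Polynomial.hermite (k + 1)) : ℝ) *
        Real.exp (-(b ^ 2 / 2) * Real.sinh r ^ 2) * Real.exp (k * r)) ∧
    (∫ r : ℝ,
        (Polynomial.aeval (b * Real.sinh r) (Polynomial.hermite (k + 1)) : ℝ) *
          Real.exp (-(b ^ 2 / 2) * Real.sinh r ^ 2) * Real.exp (k * r)) = 0 := by
  simp only [← hermiteGaussian_mul]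
  have hmoment := integrable_hermiteGaussian_mul_mul_aeval hb (k + 1) ((1 + X ^ 2) ^ k)
  simp only [map_pow, map_add, map_one, aeval_X] at hmoment
  have hint := integrable_comp_sinh_mul_exp (g := fun t => hermiteGaussian (k + 1) (b * t))
    ((continuous_hermiteGaussian (k + 1)).comp (continuous_const_mul b)) k hmoment
  refine ⟨hint, ?_⟩
  have hparity (t : ℝ) : hermiteGaussian (k + 1) (b * -t) =
      (-1) ^ (k + 1) * hermiteGaussian (k + 1) (b * t) := by
    rw [mul_neg, hermiteGaussian_neg]
  refine (integral_comp_sinh_mul_exp_eq_integral_mul_pell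
    (g := fun t => hermiteGaussian (k + 1) (b * t)) hparity hint).trans ?_
  simpa using integral_hermiteGaussian_mul_mul_aeval_eq_zero hb
    ((natDegree_pell_le (R := ℝ) k).trans_lt k.lt_succ_self)
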